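/- arXiv:2107.08244 — 2 statements merged into one kernel-verified Lean document; each statement's English description precedes it below -/
import Mathlib

section
/- If M and N are nonzero finite-dimensional representations of Q with the same dimension vector, then Hom_Q(M,N) ≠ 0. -/
open Matrix

noncomputable section

/-- Data of a finite quiver: a vertex set `I` and an arrow set `Ω` with source and target maps. -/
structure QuivData where
  I : Type
  Ω : Type
  s : Ω → I
  t : Ω → I

/-- The Zariski topology on the affine space `σ → ℂ`, generated by the complements
of hypersurfaces. -/
def zariskiTop (σ : Type*) : TopologicalSpace (σ → ℂ) :=
  TopologicalSpace.generateFrom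
    {U | ∃ p : MvPolynomial σ ℂ, U = {x | MvPolynomial.eval x p ≠ 0}}

/-- The dimension of a subset of affine space: the topological Krull dimension for the
(subspace) Zariski topology. -/
def zDim {σ : Type*} (S : Set (σ → ℂ)) : WithBot ℕ∞ :=
  @topologicalKrullDim S (@instTopologicalSpaceSubtype _ _ (zariskiTop σ))

/-- Zariski closure in affine space. -/
def zClosure {σ : Type*} (S : Set (σ → ℂ)) : Set (σ → ℂ) := @closure _ (zariskiTop σ) S

def zIsClosed {σ : Type*} (S : Set (σ → ℂ)) : Prop := @IsClosed _ (zariskiTop σ) S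

def zIsOpen {σ : Type*} (S : Set (σ → ℂ)) : Prop := @IsOpen _ (zariskiTop σ) S

def zIsIrreducible {σ : Type*} (S : Set (σ → ℂ)) : Prop := @IsIrreducible _ (zariskiTop σ) S

namespace QuivData

variable (Q : QuivData)

/-- The space `E_d` of representations of `Q` on the `I`-graded vector space
`⊕ i, (n i → ℂ)`, given as tuples of matrices indexed by the arrows. -/
abbrev RepSpace (n : Q.I → Type) : Type := ∀ h : Q.Ω, Matrix (n (Q.t h)) (n (Q.s h)) ℂ

/-- The coordinates of the representation space. -/
abbrev RepCoord (n : Q.I → Type) : Type := (h : Q.Ω) × (n (Q.t h) × n (Q.s h))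

/-- The (bijective) coordinate chart of the representation space. -/
def toCoord {n : Q.I → Type} (x : Q.RepSpace n) : Q.RepCoord n → ℂ :=
  fun c => x c.1 c.2.1 c.2.2

variable {Q}

/-- Zariski closure inside a representation space. -/
def repClosure {n : Q.I → Type} (S : Set (Q.RepSpace n)) : Set (Q.RepSpace n) :=
  Q.toCoord ⁻¹' zClosure (Q.toCoord '' S)

/-- Dimension of a subset of a representation space. -/
def repDim {n : Q.I → Type} (S : Set (Q.RepSpace n)) : WithBot ℕ∞ := zDim (Q.toCoord '' S)

def repIsClosed {n : Q.I → Type} (S : Set (Q.RepSpace n)) : Prop := zIsClosed (Q.toCoord '' S)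

def repIsOpen {n : Q.I → Type} (S : Set (Q.RepSpace n)) : Prop := zIsOpen (Q.toCoord '' S)

def repIsIrreducible {n : Q.I → Type} (S : Set (Q.RepSpace n)) : Prop :=
  zIsIrreducible (Q.toCoord '' S)

section Group

variable {n : Q.I → Type} [∀ i, Fintype (n i)] [∀ i, DecidableEq (n i)]

/-- The base-change action of `G_d = ∏ i, GL(n i, ℂ)` on the representation space. -/
def act (g : ∀ i, GL (n i) ℂ) (x : Q.RepSpace n) : Q.RepSpace n :=
  fun h => (g (Q.t h) : Matrix (n (Q.t h)) (n (Q.t h)) ℂ) * x h *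
    (((g (Q.s h))⁻¹ : GL (n (Q.s h)) ℂ) : Matrix (n (Q.s h)) (n (Q.s h)) ℂ)

/-- The `G_d`-orbit of a representation; orbits correspond to Kostant partitions
(isomorphism classes). -/
def orbit (x : Q.RepSpace n) : Set (Q.RepSpace n) := {y | ∃ g : ∀ i, GL (n i) ℂ, act g x = y}

/-- The degeneration order on Kostant partitions (given by representatives):
`a ≤ b` iff `𝒪_b ⊆ closure 𝒪_a`. -/
def KPle (a b : Q.RepSpace n) : Prop := orbit b ⊆ repClosure (orbit a)

/-- Strict degeneration order on Kostant partitions (given by representatives). -/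
def KPlt (a b : Q.RepSpace n) : Prop := KPle a b ∧ orbit a ≠ orbit b

/-- Coordinates on the group `∏ i, GL(n i, ℂ)` (matrix entries). -/
def glCoord (g : ∀ i, GL (n i) ℂ) : ((i : Q.I) × (n i × n i)) → ℂ :=
  fun c => (g c.1 : Matrix _ _ ℂ) c.2.1 c.2.2

/-- The matrix of the inverse of a group element. -/
def glInvMat (g : ∀ i, GL (n i) ℂ) (i : Q.I) : Matrix (n i) (n i) ℂ :=
  ((g i)⁻¹ : GL (n i) ℂ)

end Group

section HomExt

variable {n m : Q.I → Type} [∀ i, Fintype (n i)] [∀ i, Fintype (m i)]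

/-- The space `Hom_Q(M_x, M_y)` of morphisms of representations, as a submodule of
`∏ i, Hom(ℂ^{n i}, ℂ^{m i})`. -/
def homSubmodule (x : Q.RepSpace n) (y : Q.RepSpace m) :
    Submodule ℂ (∀ i, Matrix (m i) (n i) ℂ) where
  carrier := {f | ∀ h, f (Q.t h) * x h = y h * f (Q.s h)}
  add_mem' := by
    intro f g hf hg h
    simp only [Pi.add_apply, Matrix.add_mul, Matrix.mul_add, hf h, hg h]
  zero_mem' := by
    intro h
    simp
  smul_mem' := by
    intro c f hf h
    simp only [Pi.smul_apply, Matrix.smul_mul, Matrix.mul_smul, hf h]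

/-- `[M_x, M_y] = dim Hom_Q(M_x, M_y)`. -/
def homDim (x : Q.RepSpace n) (y : Q.RepSpace m) : ℕ :=
  Module.finrank ℂ (homSubmodule x y)

/-- The standard map `∏ i, Hom(ℂ^{n i}, ℂ^{m i}) → ∏ h, Hom(ℂ^{n (s h)}, ℂ^{m (t h)})`
whose kernel is `Hom_Q(M_x, M_y)` and whose cokernel is `Ext¹_Q(M_x, M_y)`. -/
def extLinMap (x : Q.RepSpace n) (y : Q.RepSpace m) :
    (∀ i, Matrix (m i) (n i) ℂ) →ₗ[ℂ] (∀ h : Q.Ω, Matrix (m (Q.t h)) (n (Q.s h)) ℂ) where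
  toFun f := fun h => y h * f (Q.s h) - f (Q.t h) * x h
  map_add' f g := by
    funext h
    simp only [Pi.add_apply, Matrix.mul_add, Matrix.add_mul]
    abel
  map_smul' c f := by
    funext h
    simp only [Pi.smul_apply, Matrix.mul_smul, Matrix.smul_mul, RingHom.id_apply, smul_sub]

/-- `[M_x, M_y]¹ = dim Ext¹_Q(M_x, M_y)`. -/
def ext1Dim (x : Q.RepSpace n) (y : Q.RepSpace m) : ℕ :=
  Module.finrank ℂ (∀ h : Q.Ω, Matrix (m (Q.t h)) (n (Q.s h)) ℂ)
    - Module.finrank ℂ (LinearMap.range (extLinMap x y))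

end HomExt

section Sub

variable {n m na nb ng : Q.I → Type} [∀ i, Fintype (n i)] [∀ i, Fintype (m i)]
  [∀ i, Fintype (na i)] [∀ i, Fintype (nb i)] [∀ i, Fintype (ng i)]

/-- `W` is an `I`-graded subspace stable under the representation `x`. -/
def IsSubrep (x : Q.RepSpace n) (W : ∀ i, Submodule ℂ (n i → ℂ)) : Prop :=
  ∀ h, (W (Q.s h)).map (Matrix.mulVecLin (x h)) ≤ W (Q.t h)

/-- The restriction of `x` to the stable graded subspace `W` is isomorphic to the
representation `y`. -/
def RestrictIso (x : Q.RepSpace n) (W : ∀ i, Submodule ℂ (n i → ℂ))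
    (y : Q.RepSpace m) : Prop :=
  ∃ f : ∀ i, ((m i → ℂ) →ₗ[ℂ] (n i → ℂ)),
    (∀ i, Function.Injective (f i)) ∧ (∀ i, LinearMap.range (f i) = W i) ∧
    (∀ h, (Matrix.mulVecLin (x h)).comp (f (Q.s h)) = (f (Q.t h)).comp (Matrix.mulVecLin (y h)))

/-- The representation induced by `x` on the quotient by the stable graded subspace `W`
is isomorphic to the representation `z`. -/
def QuotIso (x : Q.RepSpace n) (W : ∀ i, Submodule ℂ (n i → ℂ))
    (z : Q.RepSpace m) : Prop :=
  ∃ u : ∀ i, ((n i → ℂ) →ₗ[ℂ] (m i → ℂ)),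
    (∀ i, Function.Surjective (u i)) ∧ (∀ i, LinearMap.ker (u i) = W i) ∧
    (∀ h, (u (Q.t h)).comp (Matrix.mulVecLin (x h)) = (Matrix.mulVecLin (z h)).comp (u (Q.s h)))

/-- A short exact sequence of representations `0 → M_y → M_x → M_z → 0`. -/
def ShortExact (y : Q.RepSpace nb) (x : Q.RepSpace ng) (z : Q.RepSpace na) : Prop :=
  ∃ (f : ∀ i, ((nb i → ℂ) →ₗ[ℂ] (ng i → ℂ))) (u : ∀ i, ((ng i → ℂ) →ₗ[ℂ] (na i → ℂ))),
    (∀ i, Function.Injective (f i)) ∧ (∀ i, Function.Surjective (u i)) ∧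
    (∀ i, LinearMap.ker (u i) = LinearMap.range (f i)) ∧
    (∀ h, (Matrix.mulVecLin (x h)).comp (f (Q.s h)) = (f (Q.t h)).comp (Matrix.mulVecLin (y h))) ∧
    (∀ h, (u (Q.t h)).comp (Matrix.mulVecLin (x h)) = (Matrix.mulVecLin (z h)).comp (u (Q.s h)))

/-- `e` is a generic extension `M_z ∗ M_y` of `M_z` by `M_y`: it is a middle term of a short
exact sequence `0 → M_y → e → M_z → 0` minimizing `dim Ext¹(e, e)`. -/
def IsGenericExt (y : Q.RepSpace nb) (z : Q.RepSpace na) (e : Q.RepSpace ng) : Prop :=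
  ShortExact y e z ∧
    ∀ e' : Q.RepSpace ng, ShortExact y e' z → ext1Dim e e ≤ ext1Dim e' e'

/-- `(z, y)` (that is, `(μ, ν)`) is a generic pair of `x` (that is, `λ`): there is a short
exact sequence `0 → M_y → M_x → M_z → 0`, no `y' < y` fits in such a sequence with quotient
`M_z`, and no `z' < z` fits in such a sequence with submodule `M_y`. -/
def GenericPair [∀ i, DecidableEq (na i)] [∀ i, DecidableEq (nb i)]
    (x : Q.RepSpace ng) (z : Q.RepSpace na) (y : Q.RepSpace nb) : Prop :=
  ShortExact y x z ∧
    (∀ y' : Q.RepSpace nb, ShortExact y' x z → ¬ KPlt y' y) ∧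
    (∀ z' : Q.RepSpace na, ShortExact y x z' → ¬ KPlt z' z)

end Sub

/-- `Q` is of Dynkin type: its Tits form is positive definite. -/
def IsDynkin (Q : QuivData) [Fintype Q.I] [Fintype Q.Ω] : Prop :=
  ∀ d : Q.I → ℚ, d ≠ 0 → 0 < (∑ i, d i * d i) - ∑ h : Q.Ω, d (Q.s h) * d (Q.t h)

/-- The Euler form `⟨α, β⟩ = ∑ i, α i * β i - ∑ h, α (s h) * β (t h)`. -/
def euler (Q : QuivData) [Fintype Q.I] [Fintype Q.Ω] (a b : Q.I → ℕ) : ℤ :=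
  (∑ i, (a i : ℤ) * b i) - ∑ h : Q.Ω, (a (Q.s h) : ℤ) * b (Q.t h)

section Blocks

variable (Q : QuivData) (α β : Q.I → ℕ)

/-- The `I`-graded space of graded dimension `γ = α + β`, decomposed as `V = W ⊕ U` with
`dim W = β` (the first block) and `dim U = α`. -/
abbrev nGam : Q.I → Type := fun i => Fin (β i) ⊕ Fin (α i)

/-- `F_{β,γ}`: the representations preserving the standard graded subspace `W`
(block lower-left zero). -/
def Fsub : Set (Q.RepSpace (nGam Q α β)) := {x | ∀ h, (x h).toBlocks₂₁ = 0}

/-- The restriction to `W` of a representation in `F_{β,γ}` (upper-left block). -/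
def subBlock (x : Q.RepSpace (nGam Q α β)) : Q.RepSpace (fun i => Fin (β i)) :=
  fun h => (x h).toBlocks₁₁

/-- The representation induced on `V/W` by a representation in `F_{β,γ}`
(lower-right block). -/
def quotBlock (x : Q.RepSpace (nGam Q α β)) : Q.RepSpace (fun i => Fin (α i)) :=
  fun h => (x h).toBlocks₂₂

/-- The block representation `[[y, u], [0, z]]` of `F_{β,γ}`. -/
def blockRep (y : Q.RepSpace (fun i => Fin (β i)))
    (u : ∀ h : Q.Ω, Matrix (Fin (β (Q.t h))) (Fin (α (Q.s h))) ℂ)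
    (z : Q.RepSpace (fun i => Fin (α i))) : Q.RepSpace (nGam Q α β) :=
  fun h => Matrix.fromBlocks (y h) (u h) 0 (z h)

/-- The direct sum `M_z ⊕ M_y` realized in block form. -/
def dsum (z : Q.RepSpace (fun i => Fin (α i))) (y : Q.RepSpace (fun i => Fin (β i))) :
    Q.RepSpace (nGam Q α β) :=
  blockRep Q α β y 0 z

/-- `κ_λ⁻¹(M_z, M_y)`: the fiber of `κ : closure(𝒪_λ) ∩ F_{β,γ} → E_α × E_β` over `(z, y)`. -/
def kappaFiber (xl : Q.RepSpace (nGam Q α β)) (z : Q.RepSpace (fun i => Fin (α i)))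
    (y : Q.RepSpace (fun i => Fin (β i))) : Set (Q.RepSpace (nGam Q α β)) :=
  {x | x ∈ repClosure (orbit xl) ∧ x ∈ Fsub Q α β ∧ quotBlock Q α β x = z ∧ subBlock Q α β x = y}

/-- The standard graded subspace `W` (first block) of `V`. -/
def Wstd (i : Q.I) : Submodule ℂ ((Fin (β i) ⊕ Fin (α i)) → ℂ) where
  carrier := {v | ∀ j, v (Sum.inr j) = 0}
  add_mem' := by
    intro v w hv hw j
    simp [hv j, hw j]
  zero_mem' := by
    intro j
    rfl
  smul_mem' := by
    intro c v hv j
    simp [hv j]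

/-- The parabolic subgroup `P_{β,γ} = {g ∈ G_γ : g W = W}`. -/
def Psub : Set (∀ i, GL (Fin (β i) ⊕ Fin (α i)) ℂ) :=
  {g | ∀ i, (Wstd Q α β i).map (Matrix.mulVecLin ((g i : Matrix _ _ ℂ))) = Wstd Q α β i}

/-- Coordinates on `E_α × E_β`, defining its Zariski topology. -/
def prodCoord {na nb : Q.I → Type} (p : Q.RepSpace na × Q.RepSpace nb) :
    (Q.RepCoord na ⊕ Q.RepCoord nb) → ℂ :=
  Sum.elim (Q.toCoord p.1) (Q.toCoord p.2)

end Blocks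

end QuivData

/-! Morphisms `M → N` form the kernel of the linear map `extLinMap`
from `∏ i, Hom(ℂ^{d i}, ℂ^{d i})` to `∏ h, Hom(ℂ^{d (s h)}, ℂ^{d (t h)})`, so by rank–nullity
`dim Hom_Q(M, N) ≥ ∑ i, d i ^ 2 - ∑ h, d (s h) * d (t h)`. This is the Tits form of `d`,
which is positive for a Dynkin quiver and `d ≠ 0`. -/

theorem finrank_pi_matrix {K ι : Type*} [Field K] [Fintype ι] (r c : ι → Type*)
    [∀ i, Fintype (r i)] [∀ i, Fintype (c i)] :
    Module.finrank K (∀ i, Matrix (r i) (c i) K) =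
      ∑ i, Fintype.card (r i) * Fintype.card (c i) := by
  simp [Module.finrank_pi_fintype, Module.finrank_matrix]

namespace QuivData

section EulerForm

variable {Q : QuivData} {n m : Q.I → Type} [∀ i, Fintype (n i)] [∀ i, Fintype (m i)]

theorem homSubmodule_eq_ker_extLinMap (x : Q.RepSpace n) (y : Q.RepSpace m) :
    homSubmodule x y = LinearMap.ker (extLinMap x y) := by
  ext f
  simp only [LinearMap.mem_ker, funext_iff, Pi.zero_apply, extLinMap, LinearMap.coe_mk,
    AddHom.coe_mk, sub_eq_zero]
  exact forall_congr' fun h => eq_comm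

/-- By rank–nullity for `extLinMap`, `dim Hom(M, N) - dim Ext¹(M, N) = ⟨dim M, dim N⟩`. -/
theorem euler_le_homDim [Fintype Q.I] [Fintype Q.Ω] (x : Q.RepSpace n) (y : Q.RepSpace m) :
    euler Q (fun i => Fintype.card (n i)) (fun i => Fintype.card (m i)) ≤ homDim x y := by
  have hrank := LinearMap.finrank_range_add_finrank_ker (extLinMap x y)
  have hrange := Submodule.finrank_le (LinearMap.range (extLinMap x y))
  rw [finrank_pi_matrix] at hrank hrange
  rw [homDim, homSubmodule_eq_ker_extLinMap, euler, sub_le_iff_le_add]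
  have hle : ∑ i, Fintype.card (n i) * Fintype.card (m i) ≤
      Module.finrank ℂ (LinearMap.ker (extLinMap x y)) +
        ∑ h : Q.Ω, Fintype.card (n (Q.s h)) * Fintype.card (m (Q.t h)) := by
    simp only [mul_comm (Fintype.card (n _))] at hrange ⊢
    omega
  exact_mod_cast hle

end EulerForm

theorem IsDynkin.euler_self_pos {Q : QuivData} [Fintype Q.I] [Fintype Q.Ω] (hQ : IsDynkin Q)
    {d : Q.I → ℕ} (hd : d ≠ 0) : 0 < euler Q d d := by
  have hdℚ : (fun i => (d i : ℚ)) ≠ 0 := fun h =>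
    hd (funext fun i => by simpa using congrFun h i)
  rw [euler]
  exact_mod_cast hQ _ hdℚ

/-- If `M` and `N` are nonzero finite-dimensional representations of a Dynkin
quiver `Q` with the same dimension vector, then `Hom_Q(M,N) ≠ 0`. -/
theorem statement7 (Q : QuivData) [Fintype Q.I] [Fintype Q.Ω] (hQ : IsDynkin Q)
    (d : Q.I → ℕ) (hd : ∃ i, 0 < d i)
    (x y : Q.RepSpace (fun i => Fin (d i))) :
    homSubmodule x y ≠ ⊥ := by
  obtain ⟨i, hi⟩ := hd
  have hd0 : d ≠ 0 := fun h => by simp [h] at hi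
  have hle := euler_le_homDim x y
  simp only [Fintype.card_fin] at hle
  have hpos : 0 < homDim x y := by
    exact_mod_cast (hQ.euler_self_pos hd0).trans_le hle
  exact Submodule.one_le_finrank_iff.mp hpos

end QuivData
end
end

section
/- Let λ = Σ_{i=1}^r [a_i, b_i] be a multisegment with a_1 < a_2 < ⋯ < a_r and b_1 < b_2 < ⋯ < b_r, and let t_1 < t_2 < ⋯ < t_r be integers with a_i ≤ t_i ≤ b_i + 1 for all i. Put μ = Σ_{i=1}^r [a_i, t_i] and ν = Σ_{i=1}^r [t_i + 1, b_i], where empty segments are omitted. Then (μ,ν) is a generic pair of λ. -/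
open Matrix

noncomputable section

namespace QuivData

/-- The equioriented type `A_n` quiver `1 → 2 → ⋯ → n` (vertex `i : Fin n` stands for the
integer `i + 1 ∈ [1, n]`). -/
def Atype (n : ℕ) : QuivData where
  I := Fin n
  Ω := Fin (n - 1)
  s := fun k => ⟨k.1, by have := k.isLt; omega⟩
  t := fun k => ⟨k.1 + 1, by have := k.isLt; omega⟩

instance (n : ℕ) : Fintype (Atype n).I := by unfold Atype; infer_instance
instance (n : ℕ) : Fintype (Atype n).Ω := by unfold Atype; infer_instance

/-- The graded vector space of the representation `M_λ = ⊕_k M[a k, b k]` attached to the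
multisegment `λ = Σ_k [a k, b k]`: the basis at the vertex `i` (i.e. the integer `i + 1`)
consists of the segments containing `i + 1`. -/
def segType (n r : ℕ) (a b : Fin r → ℕ) (i : (Atype n).I) : Type :=
  {k : Fin r // a k ≤ i.1 + 1 ∧ i.1 + 1 ≤ b k}

instance (n r : ℕ) (a b : Fin r → ℕ) (i : (Atype n).I) : Fintype (segType n r a b i) := by
  unfold segType; infer_instance

instance (n r : ℕ) (a b : Fin r → ℕ) (i : (Atype n).I) : DecidableEq (segType n r a b i) := by
  unfold segType; infer_instance

/-- The representation `M_λ = ⊕_k M[a k, b k]` of the multisegment `λ = Σ_k [a k, b k]`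
(empty segments contribute nothing): each segment contributes a string of identity maps. -/
def segRep (n r : ℕ) (a b : Fin r → ℕ) : (Atype n).RepSpace (segType n r a b) :=
  fun h => Matrix.of (fun kt ks => if kt.1 = ks.1 then (1 : ℂ) else 0)

end QuivData

/-!
Write `ι : M_ν → M_λ` for the inclusion of the tails `[t_k + 1, b_k]` of the segments of `λ` and
`π : M_λ → M_μ` for the projection onto their heads `[a_k, t_k]`. Propagating along the arrows, a
morphism `M_λ' → M_λ''` between representations of segments has zero matrix entry from a basis
vector of the segment `k` of `λ'` to one of the segment `j` of `λ''` whenever `j` starts after `k`,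
and likewise whenever `j` ends after `k`. As `a`, `b` and `t` are strictly increasing, every
morphism `M_λ → M_μ` therefore kills `im ι` and every morphism `M_ν → M_λ` lands in `ker π`;
counting dimensions, a surjection `M_λ → M_μ` has kernel exactly `im ι` and an injection
`M_ν → M_λ` has image exactly `im ι = ker π`. Hence in every short exact sequence
`0 → M_ν' → M_λ → M_μ → 0` the kernel is isomorphic to `M_ν`, and in every
`0 → M_ν → M_λ → M_μ' → 0` the quotient is isomorphic to `M_μ`.
-/

theorem LinearMap.ker_eq_of_le_of_surjective {K V W : Type*} [Field K] [AddCommGroup V]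
    [Module K V] [AddCommGroup W] [Module K W] [FiniteDimensional K V] {u v : V →ₗ[K] W}
    (hu : Function.Surjective u) (hv : Function.Surjective v)
    (h : LinearMap.ker u ≤ LinearMap.ker v) : LinearMap.ker u = LinearMap.ker v := by
  refine Submodule.eq_of_le_of_finrank_eq h ?_
  have hu' := LinearMap.finrank_range_add_finrank_ker u
  have hv' := LinearMap.finrank_range_add_finrank_ker v
  rw [LinearMap.range_eq_top.mpr hu, finrank_top] at hu'
  rw [LinearMap.range_eq_top.mpr hv, finrank_top] at hv'
  omega

theorem LinearMap.range_eq_of_le_of_injective {K V W : Type*} [Field K] [AddCommGroup V]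
    [Module K V] [AddCommGroup W] [Module K W] [FiniteDimensional K V] [FiniteDimensional K W]
    {u v : V →ₗ[K] W} (hu : Function.Injective u) (hv : Function.Injective v)
    (h : LinearMap.range u ≤ LinearMap.range v) : LinearMap.range u = LinearMap.range v :=
  Submodule.eq_of_le_of_finrank_eq h <| by
    rw [LinearMap.finrank_range_of_inj hu, LinearMap.finrank_range_of_inj hv]

theorem LinearMap.apply_eq_sum_apply_single {K ι κ : Type*} [Field K] [Fintype κ]
    [DecidableEq κ] (u : (κ → K) →ₗ[K] (ι → K)) (x : κ → K) (j : ι) :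
    u x j = ∑ k, u (Pi.single k 1) j * x k := by
  rw [← LinearMap.toMatrix'_mulVec]
  simp [mulVec, dotProduct, LinearMap.toMatrix'_apply]

namespace QuivData

section Orbits

variable {Q : QuivData} {n m : Q.I → Type} [∀ i, Fintype (n i)] [∀ i, Fintype (m i)]

def IsHom (x : Q.RepSpace n) (y : Q.RepSpace m) (f : ∀ i, (n i → ℂ) →ₗ[ℂ] (m i → ℂ)) : Prop :=
  ∀ h, (f (Q.t h)).comp (mulVecLin (x h)) = (mulVecLin (y h)).comp (f (Q.s h))

theorem IsHom.apply {x : Q.RepSpace n} {y : Q.RepSpace m} {f : ∀ i, (n i → ℂ) →ₗ[ℂ] (m i → ℂ)}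
    (hf : IsHom x y f) (h : Q.Ω) (v : n (Q.s h) → ℂ) :
    f (Q.t h) (x h *ᵥ v) = y h *ᵥ f (Q.s h) v :=
  LinearMap.congr_fun (hf h) v

variable [∀ i, DecidableEq (n i)]

theorem act_act (g g' : ∀ i, GL (n i) ℂ) (x : Q.RepSpace n) :
    act g (act g' x) = act (g * g') x := by
  funext h
  simp only [act, Pi.mul_apply, _root_.mul_inv_rev, Units.val_mul, Matrix.mul_assoc]

theorem orbit_eq_of_act {g : ∀ i, GL (n i) ℂ} {x y : Q.RepSpace n} (hg : act g x = y) :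
    orbit x = orbit y := by
  ext w
  constructor
  · rintro ⟨g', rfl⟩
    exact ⟨g' * g⁻¹, by rw [← hg, act_act, inv_mul_cancel_right]⟩
  · rintro ⟨g', rfl⟩
    exact ⟨g' * g, by rw [← hg, act_act]⟩

theorem orbit_eq_of_linearEquiv {x y : Q.RepSpace n} (e : ∀ i, (n i → ℂ) ≃ₗ[ℂ] (n i → ℂ))
    (he : IsHom x y fun i => (e i).toLinearMap) : orbit x = orbit y := by
  let g : ∀ i, GL (n i) ℂ := fun i =>
    Matrix.GeneralLinearGroup.toLin.symm (LinearMap.GeneralLinearGroup.ofLinearEquiv (e i))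
  have hg : ∀ i, mulVecLin (g i).1 = e i := fun i => by
    rw [← Matrix.GeneralLinearGroup.coe_toLin, MulEquiv.apply_symm_apply]
    rfl
  refine orbit_eq_of_act (g := g) (funext fun h => ?_)
  have hcomm : (g (Q.t h)).1 * x h = y h * (g (Q.s h)).1 := Matrix.toLin'.injective <| by
    simp only [Matrix.toLin'_apply', Matrix.mulVecLin_mul, hg]
    exact he h
  simp only [act, hcomm, Matrix.mul_assoc, ← Units.val_mul, mul_inv_cancel, Units.val_one,
    Matrix.mul_one]

theorem orbit_eq_of_range_eq {ng : Q.I → Type} [∀ i, Fintype (ng i)] {x : Q.RepSpace ng}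
    {y y' : Q.RepSpace n} {f f' : ∀ i, (n i → ℂ) →ₗ[ℂ] (ng i → ℂ)}
    (hf : IsHom y x f) (hf' : IsHom y' x f') (hinj : ∀ i, Function.Injective (f i))
    (hinj' : ∀ i, Function.Injective (f' i))
    (hrange : ∀ i, LinearMap.range (f i) = LinearMap.range (f' i)) : orbit y = orbit y' := by
  let e : ∀ i, (n i → ℂ) ≃ₗ[ℂ] (n i → ℂ) := fun i =>
    (LinearEquiv.ofInjective (f i) (hinj i)).trans
      ((LinearEquiv.ofEq _ _ (hrange i)).trans (LinearEquiv.ofInjective (f' i) (hinj' i)).symm)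
  have he : ∀ i v, f' i (e i v) = f i v := fun i v =>
    LinearEquiv.ofInjective_symm_apply (f' i) (h := hinj' i) _
  refine orbit_eq_of_linearEquiv e fun h => LinearMap.ext fun v => hinj' (Q.t h) ?_
  simp only [LinearMap.comp_apply, LinearEquiv.coe_coe, mulVecLin_apply]
  rw [he, hf.apply, hf'.apply, he]

theorem orbit_eq_of_ker_eq {ng : Q.I → Type} [∀ i, Fintype (ng i)] {x : Q.RepSpace ng}
    {z z' : Q.RepSpace n} {u u' : ∀ i, (ng i → ℂ) →ₗ[ℂ] (n i → ℂ)}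
    (hu : IsHom x z u) (hu' : IsHom x z' u') (hsurj : ∀ i, Function.Surjective (u i))
    (hsurj' : ∀ i, Function.Surjective (u' i))
    (hker : ∀ i, LinearMap.ker (u i) = LinearMap.ker (u' i)) : orbit z = orbit z' := by
  let e : ∀ i, (n i → ℂ) ≃ₗ[ℂ] (n i → ℂ) := fun i =>
    ((u i).quotKerEquivOfSurjective (hsurj i)).symm.trans
      ((Submodule.quotEquivOfEq _ _ (hker i)).trans ((u' i).quotKerEquivOfSurjective (hsurj' i)))
  have he : ∀ i v, e i (u i v) = u' i v := fun i v => by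
    simp [e]
  refine orbit_eq_of_linearEquiv e fun h => LinearMap.ext fun w => ?_
  obtain ⟨v, rfl⟩ := hsurj (Q.s h) w
  simp only [LinearMap.comp_apply, LinearEquiv.coe_coe, mulVecLin_apply]
  rw [← hu.apply, he, he, hu'.apply]

end Orbits

section Segments

variable {n r : ℕ} {a b : Fin r → ℕ}

/-- The integer `i + 1 ∈ [1, n]` labelling the vertex `i`. Unlike `i.1`, which applies `Fin.val`
to a term of the non-reducible type `(Atype n).I`, it keeps goals well-typed at reducible
transparency, so `simp`, `rw` and `split_ifs` work on them. -/
def vertexLabel (i : (Atype n).I) : ℕ := i.1 + 1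

theorem one_le_vertexLabel (i : (Atype n).I) : 1 ≤ vertexLabel i := Nat.le_add_left 1 _

theorem vertexLabel_le (i : (Atype n).I) : vertexLabel i ≤ n := i.2

theorem vertexLabel_t (h : (Atype n).Ω) :
    vertexLabel ((Atype n).t h) = vertexLabel ((Atype n).s h) + 1 := rfl

theorem Atype.exists_t_eq {i : (Atype n).I} (hi : 2 ≤ vertexLabel i) : ∃ h, (Atype n).t h = i :=
  ⟨⟨i.1 - 1, by have := vertexLabel_le i; unfold vertexLabel at *; omega⟩,
    Fin.ext (by unfold vertexLabel at hi; show i.1 - 1 + 1 = i.1; omega)⟩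

theorem Atype.exists_s_eq {i : (Atype n).I} (hi : vertexLabel i < n) : ∃ h, (Atype n).s h = i :=
  ⟨⟨i.1, by unfold vertexLabel at hi; omega⟩, rfl⟩

/-- Used instead of `k.1`, whose implicit predicate applies `Fin.val` to a vertex, for the same
reason as `vertexLabel`. -/
def segVal {i : (Atype n).I} (k : segType n r a b i) : Fin r := k.1

theorem segVal_injective {i : (Atype n).I} :
    Function.Injective (segVal : segType n r a b i → Fin r) :=
  fun _ _ => Subtype.ext

theorem segType_mem {i : (Atype n).I} (k : segType n r a b i) :
    a (segVal k) ≤ vertexLabel i ∧ vertexLabel i ≤ b (segVal k) := k.2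

def segIdx {i : (Atype n).I} (k : Fin r) (hk : a k ≤ vertexLabel i ∧ vertexLabel i ≤ b k) :
    segType n r a b i :=
  ⟨k, hk⟩

@[simp] theorem segVal_segIdx {i : (Atype n).I} (k : Fin r)
    (hk : a k ≤ vertexLabel i ∧ vertexLabel i ≤ b k) :
    segVal (segIdx k hk : segType n r a b i) = k := rfl

@[simp] theorem segIdx_segVal {i : (Atype n).I} (k : segType n r a b i) :
    segIdx (segVal k) (segType_mem k) = k := rfl

theorem segRep_mulVec_apply (h : (Atype n).Ω) (v : segType n r a b ((Atype n).s h) → ℂ)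
    (k : segType n r a b ((Atype n).t h)) :
    (segRep n r a b h *ᵥ v) k =
      if hs : a (segVal k) ≤ vertexLabel ((Atype n).s h) ∧
          vertexLabel ((Atype n).s h) ≤ b (segVal k) then
        v (segIdx (segVal k) hs)
      else 0 := by
  change ∑ k', (if segVal k = segVal k' then (1 : ℂ) else 0) * v k' = _
  split_ifs with hs
  · refine (Fintype.sum_eq_single (segIdx (segVal k) hs) fun k' hne => ?_).trans ?_
    · rw [if_neg fun e => hne (segVal_injective e.symm), zero_mul]
    · simp
  · refine Finset.sum_eq_zero fun k' _ => ?_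
    rw [if_neg, zero_mul]
    rintro e
    exact hs (e ▸ segType_mem k')

/-- The basis vector of the `k`-th segment at `i`, or `0` if that segment does not contain
`vertexLabel i`. -/
def segBasis (a b : Fin r → ℕ) (i : (Atype n).I) (k : Fin r) : segType n r a b i → ℂ :=
  fun k' => if segVal k' = k then 1 else 0

theorem segBasis_segVal {i : (Atype n).I} (k : segType n r a b i) :
    segBasis a b i (segVal k) = Pi.single k 1 := by
  funext k'
  simp only [segBasis, Pi.single_apply]
  exact if_congr segVal_injective.eq_iff rfl rfl

theorem segBasis_eq_zero {i : (Atype n).I} {k : Fin r}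
    (hk : ¬(a k ≤ vertexLabel i ∧ vertexLabel i ≤ b k)) : segBasis a b i k = 0 := by
  funext k'
  refine if_neg fun e => hk ?_
  subst e
  exact segType_mem k'

theorem segRep_mulVec_segBasis {h : (Atype n).Ω} {k : Fin r}
    (hk : a k ≤ vertexLabel ((Atype n).s h)) :
    segRep n r a b h *ᵥ segBasis a b ((Atype n).s h) k = segBasis a b ((Atype n).t h) k := by
  funext k'
  have hk' := segType_mem k'
  have ht := vertexLabel_t h
  rw [segRep_mulVec_apply]
  simp only [segBasis, segVal_segIdx]
  by_cases e : segVal k' = k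
  · subst e
    have hs : vertexLabel ((Atype n).s h) ≤ b (segVal k') := by omega
    simp only [if_true, hk, hs, and_self, dif_pos]
  · simp only [e, if_false, dite_eq_ite, ite_self]

theorem apply_eq_sum_segBasis {κ : Type*} {i : (Atype n).I}
    (u : (segType n r a b i → ℂ) →ₗ[ℂ] (κ → ℂ)) (x : segType n r a b i → ℂ) (j : κ) :
    u x j = ∑ k, u (segBasis a b i (segVal k)) j * x k := by
  simp only [segBasis_segVal]
  exact LinearMap.apply_eq_sum_apply_single u x j

end Segments

section Morphisms

variable {n r : ℕ} {a b a' b' : Fin r → ℕ}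
  {u : ∀ i, (segType n r a b i → ℂ) →ₗ[ℂ] (segType n r a' b' i → ℂ)}

theorem IsHom.apply_segBasis_t (hu : IsHom (segRep n r a b) (segRep n r a' b') u)
    {h : (Atype n).Ω} {k : Fin r} (hk : a k ≤ vertexLabel ((Atype n).s h))
    (j : segType n r a' b' ((Atype n).t h)) :
    u ((Atype n).t h) (segBasis a b ((Atype n).t h) k) j =
      if hj : a' (segVal j) ≤ vertexLabel ((Atype n).s h) ∧
          vertexLabel ((Atype n).s h) ≤ b' (segVal j) then
        u ((Atype n).s h) (segBasis a b ((Atype n).s h) k) (segIdx (segVal j) hj)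
      else 0 := by
  rw [← segRep_mulVec_segBasis hk, hu.apply, segRep_mulVec_apply]

theorem IsHom.apply_segBasis_eq_zero_of_lt_start (ha : ∀ k, 1 ≤ a k)
    (hu : IsHom (segRep n r a b) (segRep n r a' b') u) (i : (Atype n).I)
    (j : segType n r a' b' i) {k : Fin r} (hlt : a k < a' (segVal j)) :
    u i (segBasis a b i k) j = 0 := by
  induction hp : vertexLabel i generalizing i with
  | zero => have := one_le_vertexLabel i; omega
  | succ p ih =>
    have hj := segType_mem j
    obtain ⟨h, rfl⟩ := Atype.exists_t_eq (i := i) (by have := ha k; omega)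
    have ht := vertexLabel_t h
    rw [hu.apply_segBasis_t (by omega) j]
    split_ifs
    · exact ih _ _ hlt (by omega)
    · rfl

theorem IsHom.apply_segBasis_eq_zero_of_lt_end (hb' : ∀ k, b' k ≤ n)
    (hu : IsHom (segRep n r a b) (segRep n r a' b') u) (i : (Atype n).I)
    (j : segType n r a' b' i) {k : Fin r} (hlt : b k < b' (segVal j)) :
    u i (segBasis a b i k) j = 0 := by
  induction hp : n - vertexLabel i generalizing i with
  | zero =>
    have := hb' (segVal j)
    have := segType_mem j
    rw [segBasis_eq_zero (by omega), map_zero]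
    rfl
  | succ p ih =>
    by_cases hk : a k ≤ vertexLabel i ∧ vertexLabel i ≤ b k
    · have hj := segType_mem j
      have hbj := hb' (segVal j)
      obtain ⟨h, rfl⟩ := Atype.exists_s_eq (i := i) (by omega)
      have ht := vertexLabel_t h
      have hstep := hu.apply_segBasis_t hk.1 (segIdx (segVal j) (by omega))
      rw [segVal_segIdx, dif_pos hj, segIdx_segVal] at hstep
      exact hstep.symm.trans (ih _ _ hlt (by omega))
    · rw [segBasis_eq_zero hk, map_zero]
      rfl

end Morphisms

section SubQuot

variable {n r : ℕ} {a b : Fin r → ℕ}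

def segExtend (a' : Fin r → ℕ) (i : (Atype n).I) :
    (segType n r a' b i → ℂ) →ₗ[ℂ] (segType n r a b i → ℂ) where
  toFun c k :=
    if hk : a' (segVal k) ≤ vertexLabel i then c (segIdx (segVal k) ⟨hk, (segType_mem k).2⟩)
    else 0
  map_add' c d := by ext k; by_cases hk : a' (segVal k) ≤ vertexLabel i <;> simp [hk]
  map_smul' s c := by ext k; by_cases hk : a' (segVal k) ≤ vertexLabel i <;> simp [hk]

theorem segExtend_apply (a' : Fin r → ℕ) (i : (Atype n).I) (c : segType n r a' b i → ℂ)
    (k : segType n r a b i) :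
    segExtend a' i c k =
      if hk : a' (segVal k) ≤ vertexLabel i then c (segIdx (segVal k) ⟨hk, (segType_mem k).2⟩)
      else 0 :=
  rfl

def segRestrict {b' : Fin r → ℕ} (hb : ∀ k, b' k ≤ b k) (i : (Atype n).I) :
    (segType n r a b i → ℂ) →ₗ[ℂ] (segType n r a b' i → ℂ) :=
  LinearMap.funLeft ℂ ℂ fun j =>
    segIdx (segVal j) ⟨(segType_mem j).1, (segType_mem j).2.trans (hb (segVal j))⟩

theorem segRestrict_apply {b' : Fin r → ℕ} (hb : ∀ k, b' k ≤ b k) (i : (Atype n).I)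
    (y : segType n r a b i → ℂ) (j : segType n r a b' i) :
    segRestrict hb i y j =
      y (segIdx (segVal j) ⟨(segType_mem j).1, (segType_mem j).2.trans (hb (segVal j))⟩) :=
  rfl

theorem segExtend_injective {a' : Fin r → ℕ} (ha : ∀ k, a k ≤ a' k) (i : (Atype n).I) :
    Function.Injective (segExtend (b := b) (a := a) a' i) := by
  refine (injective_iff_map_eq_zero _).mpr fun c hc => funext fun j => ?_
  have := congrFun hc (segIdx (segVal j) ⟨(ha _).trans (segType_mem j).1, (segType_mem j).2⟩)
  simpa [segExtend_apply, (segType_mem j).1] using this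

theorem segRestrict_surjective {b' : Fin r → ℕ} (hb : ∀ k, b' k ≤ b k) (i : (Atype n).I) :
    Function.Surjective (segRestrict (a := a) hb i) :=
  LinearMap.funLeft_surjective_of_injective _ _ _ fun _ _ e =>
    segVal_injective (by simpa using congrArg segVal e)

theorem isHom_segExtend {a' : Fin r → ℕ} (ha : ∀ k, a k ≤ a' k) :
    IsHom (segRep n r a' b) (segRep n r a b) (segExtend a') := by
  intro h
  refine LinearMap.ext fun c => funext fun k => ?_
  have hk := segType_mem k
  have haa := ha (segVal k)
  have ht := vertexLabel_t h
  simp only [LinearMap.comp_apply, mulVecLin_apply, segExtend_apply, segRep_mulVec_apply,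
    segVal_segIdx]
  have hb : vertexLabel ((Atype n).s h) ≤ b (segVal k) := by omega
  by_cases ha' : a' (segVal k) ≤ vertexLabel ((Atype n).s h)
  · have ht' : a' (segVal k) ≤ vertexLabel ((Atype n).t h) := by omega
    simp [ha', hb, ht', haa.trans ha']
  · simp [ha']

theorem isHom_segRestrict {b' : Fin r → ℕ} (hb : ∀ k, b' k ≤ b k) :
    IsHom (segRep n r a b) (segRep n r a b') (segRestrict hb) := by
  intro h
  refine LinearMap.ext fun y => funext fun j => ?_
  have hj := segType_mem j
  have hbb := hb (segVal j)
  have ht := vertexLabel_t h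
  simp only [LinearMap.comp_apply, mulVecLin_apply, segRestrict_apply, segRep_mulVec_apply,
    segVal_segIdx]
  have hb' : vertexLabel ((Atype n).s h) ≤ b' (segVal j) := by omega
  by_cases ha : a (segVal j) ≤ vertexLabel ((Atype n).s h)
  · simp [ha, hb', hb'.trans hbb]
  · simp [ha]

end SubQuot

section Cut

variable {n r : ℕ} {a b t : Fin r → ℕ}

theorem ker_segRestrict_eq_range_segExtend (hat : ∀ k, a k ≤ t k + 1) (i : (Atype n).I) :
    LinearMap.ker (segRestrict (a := a) (fun k => min_le_right (t k) (b k)) i) =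
      LinearMap.range (segExtend (fun k => t k + 1) i) := by
  ext x
  rw [LinearMap.mem_ker, LinearMap.mem_range]
  constructor
  · intro hx
    refine ⟨fun j => x (segIdx (segVal j) ⟨(hat _).trans (segType_mem j).1, (segType_mem j).2⟩),
      funext fun k => ?_⟩
    have hk := segType_mem k
    rw [segExtend_apply]
    split_ifs with hν
    · rfl
    · exact (congrFun hx (segIdx (segVal k) ⟨hk.1, le_min (by omega) hk.2⟩)).symm
  · rintro ⟨c, rfl⟩
    funext j
    have hj := segType_mem j
    have hν : ¬t (segVal j) + 1 ≤ vertexLabel i := by simp only [le_inf_iff] at hj; omega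
    simp [segRestrict_apply, segExtend_apply, hν]

theorem shortExact_segRep (hat : ∀ k, a k ≤ t k + 1) :
    ShortExact (segRep n r (fun k => t k + 1) b) (segRep n r a b)
      (segRep n r a fun k => min (t k) (b k)) :=
  ⟨segExtend _, segRestrict _, segExtend_injective hat, segRestrict_surjective _,
    ker_segRestrict_eq_range_segExtend hat, fun h => (isHom_segExtend hat h).symm,
    isHom_segRestrict _⟩

theorem range_segExtend_le_ker (ha1 : ∀ k, 1 ≤ a k) (ha : StrictMono a) (ht : StrictMono t)
    {u : ∀ i, (segType n r a b i → ℂ) →ₗ[ℂ] (segType n r a (fun k => min (t k) (b k)) i → ℂ)}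
    (hu : IsHom (segRep n r a b) (segRep n r a fun k => min (t k) (b k)) u) (i : (Atype n).I) :
    LinearMap.range (segExtend (fun k => t k + 1) i) ≤ LinearMap.ker (u i) := by
  rintro _ ⟨c, rfl⟩
  refine LinearMap.mem_ker.mpr (funext fun j => ?_)
  have hj := segType_mem j
  rw [apply_eq_sum_segBasis, Pi.zero_apply]
  refine Finset.sum_eq_zero fun k _ => ?_
  rw [segExtend_apply]
  split_ifs with hk
  · rw [hu.apply_segBasis_eq_zero_of_lt_start ha1 i j (ha (ht.lt_iff_lt.mp ?_)), zero_mul]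
    simp only [le_inf_iff] at hj
    omega
  · rw [mul_zero]

theorem range_le_range_segExtend (hat : ∀ k, a k ≤ t k + 1) (hbn : ∀ k, b k ≤ n)
    (hb : StrictMono b) (ht : StrictMono t)
    {f : ∀ i, (segType n r (fun k => t k + 1) b i → ℂ) →ₗ[ℂ] (segType n r a b i → ℂ)}
    (hf : IsHom (segRep n r (fun k => t k + 1) b) (segRep n r a b) f) (i : (Atype n).I) :
    LinearMap.range (f i) ≤ LinearMap.range (segExtend (fun k => t k + 1) i) := by
  rw [← ker_segRestrict_eq_range_segExtend hat]
  rintro _ ⟨x, rfl⟩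
  refine LinearMap.mem_ker.mpr (funext fun j => ?_)
  have hj := segType_mem j
  rw [segRestrict_apply, apply_eq_sum_segBasis, Pi.zero_apply]
  refine Finset.sum_eq_zero fun k _ => ?_
  have hk := segType_mem k
  rw [hf.apply_segBasis_eq_zero_of_lt_end hbn i _ (hb (ht.lt_iff_lt.mp ?_)), zero_mul]
  simp only [le_inf_iff, Order.add_one_le_iff, segVal_segIdx] at hj hk ⊢
  omega

theorem ker_eq_range_segExtend_of_surjective (ha1 : ∀ k, 1 ≤ a k) (hat : ∀ k, a k ≤ t k + 1)
    (ha : StrictMono a) (ht : StrictMono t)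
    {u : ∀ i, (segType n r a b i → ℂ) →ₗ[ℂ] (segType n r a (fun k => min (t k) (b k)) i → ℂ)}
    (hu : IsHom (segRep n r a b) (segRep n r a fun k => min (t k) (b k)) u)
    (hsurj : ∀ i, Function.Surjective (u i)) (i : (Atype n).I) :
    LinearMap.ker (u i) = LinearMap.range (segExtend (fun k => t k + 1) i) := by
  rw [← ker_segRestrict_eq_range_segExtend hat]
  refine (LinearMap.ker_eq_of_le_of_surjective (segRestrict_surjective _ i) (hsurj i) ?_).symm
  rw [ker_segRestrict_eq_range_segExtend hat]
  exact range_segExtend_le_ker ha1 ha ht hu i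

theorem range_eq_range_segExtend_of_injective (hat : ∀ k, a k ≤ t k + 1) (hbn : ∀ k, b k ≤ n)
    (hb : StrictMono b) (ht : StrictMono t)
    {f : ∀ i, (segType n r (fun k => t k + 1) b i → ℂ) →ₗ[ℂ] (segType n r a b i → ℂ)}
    (hf : IsHom (segRep n r (fun k => t k + 1) b) (segRep n r a b) f)
    (hinj : ∀ i, Function.Injective (f i)) (i : (Atype n).I) :
    LinearMap.range (f i) = LinearMap.range (segExtend (fun k => t k + 1) i) :=
  LinearMap.range_eq_of_le_of_injective (hinj i) (segExtend_injective hat i)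
    (range_le_range_segExtend hat hbn hb ht hf i)

end Cut

theorem statement16_general (n r : ℕ) (a b t : Fin r → ℕ)
    (ha1 : ∀ k, 1 ≤ a k) (hbn : ∀ k, b k ≤ n)
    (hamono : ∀ k l : Fin r, k < l → a k < a l)
    (hbmono : ∀ k l : Fin r, k < l → b k < b l)
    (htmono : ∀ k l : Fin r, k < l → t k < t l)
    (hat : ∀ k, a k ≤ t k) :
    GenericPair (segRep n r a b)
      (segRep n r a (fun k => min (t k) (b k)))
      (segRep n r (fun k => t k + 1) b) := by
  have hat' : ∀ k, a k ≤ t k + 1 := fun k => (hat k).trans (Nat.le_succ _)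
  have ht : StrictMono t := fun k l => htmono k l
  have hmin : ∀ k, min (t k) (b k) ≤ b k := fun k => min_le_right _ _
  refine ⟨shortExact_segRep hat', ?_, ?_⟩
  · rintro ν' ⟨f, u, hinj, hsurj, hexact, hf, hu⟩ hlt
    refine hlt.2 (orbit_eq_of_range_eq (fun h => (hf h).symm) (isHom_segExtend hat') hinj
      (segExtend_injective hat') fun i => ?_)
    rw [← hexact, ker_eq_range_segExtend_of_surjective ha1 hat' (fun k l => hamono k l) ht hu
      hsurj]
  · rintro μ' ⟨f, u, hinj, hsurj, hexact, hf, hu⟩ hlt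
    refine hlt.2 (orbit_eq_of_ker_eq hu (isHom_segRestrict hmin) hsurj
      (segRestrict_surjective hmin) fun i => ?_)
    rw [hexact, range_eq_range_segExtend_of_injective hat' hbn (fun k l => hbmono k l) ht
      (fun h => (hf h).symm) hinj, ker_segRestrict_eq_range_segExtend hat']

/-- Let `λ = Σ_{i=1}^r [a_i, b_i]` be a multisegment with `a_1 < ⋯ < a_r` and
`b_1 < ⋯ < b_r`, and let `t_1 < ⋯ < t_r` be integers with `a_i ≤ t_i ≤ b_i + 1`.  Put
`μ = Σ_i [a_i, t_i]` and `ν = Σ_i [t_i + 1, b_i]` (empty segments omitted; when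
`t_i = b_i + 1` the `μ`-segment is `[a_i, b_i]`, realized below by the bound
`min (t_i) (b_i)`).  Then `(μ, ν)` is a generic pair of `λ`. -/
theorem statement16 (n r : ℕ) (a b t : Fin r → ℕ)
    (ha1 : ∀ k, 1 ≤ a k) (hab : ∀ k, a k ≤ b k) (hbn : ∀ k, b k ≤ n)
    (hamono : ∀ k l : Fin r, k < l → a k < a l)
    (hbmono : ∀ k l : Fin r, k < l → b k < b l)
    (htmono : ∀ k l : Fin r, k < l → t k < t l)
    (hat : ∀ k, a k ≤ t k) (htb : ∀ k, t k ≤ b k + 1) :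
    GenericPair (segRep n r a b)
      (segRep n r a (fun k => min (t k) (b k)))
      (segRep n r (fun k => t k + 1) b) :=
  statement16_general n r a b t ha1 hbn hamono hbmono htmono hat

end QuivData
end
end
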